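/- Let x ∈ ℝⁿ and k ∈ ℕ. Then ‖x‖₀ ≤ k if and only if there exist t ∈ ℝ and y, q, w ∈ ℝⁿ such that ‖q‖₁ + (k+1)·‖w‖_∞ ≤ t ≤ xᵀy, x = q + w, ‖y‖₁ ≤ k, and ‖y‖_∞ ≤ 1. -/

import Mathlib

/-- The number of nonzero entries of a vector (the "ℓ₀-norm"). -/
noncomputable def card0 {n : ℕ} (x : Fin n → ℝ) : ℕ := {i | x i ≠ 0}.ncard

/-- The ℓ∞-norm of a vector in `ℝⁿ` (the sup norm, which is the norm of the Pi type). -/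
noncomputable def linftyNorm {n : ℕ} (x : Fin n → ℝ) : ℝ := ‖x‖

/-! If `x = q + w` and `‖y‖_∞ ≤ 1`, `‖y‖₁ ≤ k`, Hölder's inequality gives
`xᵀy ≤ ‖q‖₁ + k‖w‖_∞`, so the constraints force `w = 0` and `‖x‖₁ ≤ xᵀy`. Since each `x i * y i`
is at most `|x i|`, equality holds termwise, so `|y i| = 1` on the support of `x` and
`‖x‖₀ ≤ ‖y‖₁ ≤ k`. Conversely `y = sign x`, `q = x`, `w = 0`, `t = ‖x‖₁` is a certificate. -/

open Finset

section

variable {n : ℕ}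

theorem card0_eq_card_filter (x : Fin n → ℝ) : card0 x = #{i | x i ≠ 0} := by
  rw [card0, ← Set.ncard_coe_finset, coe_filter]
  simp only [mem_univ, true_and]

theorem abs_le_linftyNorm (x : Fin n → ℝ) (i : Fin n) : |x i| ≤ linftyNorm x :=
  norm_le_pi_norm x i

theorem linftyNorm_nonneg (x : Fin n → ℝ) : 0 ≤ linftyNorm x := norm_nonneg x

theorem sum_mul_le_sum_abs_mul_linftyNorm (x y : Fin n → ℝ) :
    ∑ i, x i * y i ≤ (∑ i, |x i|) * linftyNorm y := by
  rw [sum_mul]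
  refine sum_le_sum fun i _ => ?_
  calc x i * y i ≤ |x i| * |y i| := abs_mul (x i) (y i) ▸ le_abs_self _
    _ ≤ |x i| * linftyNorm y := by gcongr; exact abs_le_linftyNorm y i

theorem sum_abs_sign_eq_card0 (x : Fin n → ℝ) :
    ∑ i, |(SignType.sign (x i) : ℝ)| = card0 x := by
  rw [card0_eq_card_filter, card_filter, Nat.cast_sum]
  refine sum_congr rfl fun i _ => ?_
  rcases lt_trichotomy (x i) 0 with h | h | h <;> simp [h, ne_of_lt, ne_of_gt]

theorem linftyNorm_sign_le_one (x : Fin n → ℝ) :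
    linftyNorm (fun i => (SignType.sign (x i) : ℝ)) ≤ 1 := by
  refine (pi_norm_le_iff_of_nonneg zero_le_one).2 fun i => ?_
  rcases lt_trichotomy (x i) 0 with h | h | h <;> simp [h]

theorem card0_le_sum_abs_of_sum_abs_le_sum_mul {x y : Fin n → ℝ} (hy : linftyNorm y ≤ 1)
    (hxy : ∑ i, |x i| ≤ ∑ i, x i * y i) : (card0 x : ℝ) ≤ ∑ i, |y i| := by
  have hle : ∀ i ∈ univ, x i * y i ≤ |x i| := fun i _ =>
    calc x i * y i ≤ |x i| * |y i| := abs_mul (x i) (y i) ▸ le_abs_self _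
      _ ≤ |x i| * 1 := by gcongr; exact (abs_le_linftyNorm y i).trans hy
      _ = |x i| := mul_one _
  have heq := (sum_eq_sum_iff_of_le hle).1 (le_antisymm (sum_le_sum hle) hxy)
  have hy_support : ∀ i ∈ univ.filter (x · ≠ 0), 1 ≤ |y i| := fun i hi => by
    have hx : 0 < |x i| := abs_pos.2 (mem_filter.1 hi).2
    have : |x i| * 1 ≤ |x i| * |y i| := by
      rw [mul_one, ← abs_mul, ← heq i (mem_univ i)]
      exact le_abs_self _
    exact le_of_mul_le_mul_left this hx
  calc (card0 x : ℝ) = ∑ i ∈ univ.filter (x · ≠ 0), 1 := by simp [card0_eq_card_filter]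
    _ ≤ ∑ i ∈ univ.filter (x · ≠ 0), |y i| := sum_le_sum hy_support
    _ ≤ ∑ i, |y i| := sum_le_sum_of_subset_of_nonneg (filter_subset _ _) fun i _ _ => abs_nonneg _

end

/-- Hempel–Goulart (Theorem 1): `‖x‖₀ ≤ k` iff there exist `t ∈ ℝ` and `y, q, w ∈ ℝⁿ` with
`‖q‖₁ + (k+1)‖w‖_∞ ≤ t ≤ xᵀy`, `x = q + w`, `‖y‖₁ ≤ k` and `‖y‖_∞ ≤ 1`. -/
theorem card_le_iff_hempel_goulart (n : ℕ) (x : Fin n → ℝ) (k : ℕ) :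
    card0 x ≤ k ↔
      ∃ (t : ℝ) (y q w : Fin n → ℝ),
        (∑ i, |q i|) + ((k : ℝ) + 1) * linftyNorm w ≤ t ∧
        t ≤ ∑ i, x i * y i ∧
        x = q + w ∧
        (∑ i, |y i|) ≤ (k : ℝ) ∧
        linftyNorm y ≤ 1 := by
  constructor
  · intro hk
    refine ⟨∑ i, |x i|, fun i => SignType.sign (x i), x, 0, by simp [linftyNorm],
      by simp [self_mul_sign], by simp, ?_, linftyNorm_sign_le_one x⟩
    rw [sum_abs_sign_eq_card0]
    exact_mod_cast hk
  · rintro ⟨t, y, q, w, ht_lower, ht_upper, hx, hy_l1, hy_linfty⟩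
    have hq : ∑ i, q i * y i ≤ ∑ i, |q i| :=
      (sum_mul_le_sum_abs_mul_linftyNorm q y).trans
        (mul_le_of_le_one_right (sum_nonneg fun i _ => abs_nonneg _) hy_linfty)
    have hw : ∑ i, w i * y i ≤ k * linftyNorm w := by
      simpa only [mul_comm] using (sum_mul_le_sum_abs_mul_linftyNorm y w).trans
        (mul_le_mul_of_nonneg_right hy_l1 (linftyNorm_nonneg w))
    simp only [hx, Pi.add_apply, add_mul, sum_add_distrib] at ht_upper
    have hw_zero : w = 0 :=
      norm_eq_zero.1 (le_antisymm (by linarith) (linftyNorm_nonneg w) : linftyNorm w = 0)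
    subst hw_zero
    rw [add_zero] at hx
    subst hx
    simp only [linftyNorm, norm_zero, mul_zero, add_zero, Pi.zero_apply, zero_mul, sum_const_zero]
      at ht_lower ht_upper
    exact_mod_cast (card0_le_sum_abs_of_sum_abs_le_sum_mul hy_linfty
      (ht_lower.trans ht_upper)).trans hy_l1
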